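/- Let G be a finite group with supercharacter theories C and C′ such that C ⪯ C′ (every part of the character partition of C is contained in a part of that of C′). If G is C-quasi-monomial, then G is C′-quasi-monomial. -/

import Mathlib

open scoped Classical BigOperators

noncomputable def cInd {G : Type} [Group G] [Fintype G] (H : Subgroup G)
    (f : H → ℂ) : G → ℂ := fun g =>
  (Nat.card H : ℂ)⁻¹ *
    ∑ x : G, if h : x⁻¹ * g * x ∈ H then f ⟨x⁻¹ * g * x, h⟩ else 0

noncomputable def cInner (G : Type) [Group G] [Fintype G] (φ ψ : G → ℂ) : ℂ :=
  (Nat.card G : ℂ)⁻¹ * ∑ g : G, φ g * starRingEnd ℂ (ψ g)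

/-- `χ` is the character of some finite-dimensional complex representation of `G`. -/
def IsChar (G : Type) [Group G] (χ : G → ℂ) : Prop :=
  ∃ V : FDRep ℂ G, FDRep.character V = χ

/-- `χ` is the character of some irreducible complex representation of `G`. -/
def IsIrrChar (G : Type) [Group G] (χ : G → ℂ) : Prop :=
  ∃ V : FDRep ℂ G, CategoryTheory.Simple V ∧ FDRep.character V = χ

/-- `χ` is a constituent of `θ`: their inner product is nonzero. -/
def IsConstituent {G : Type} [Group G] [Fintype G] (χ θ : G → ℂ) : Prop :=
  cInner G θ χ ≠ 0

def charKer {G : Type} [Group G] (χ : G → ℂ) : Set G := {g | χ g = χ 1}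

/-- The supercharacter attached to a set `X` of irreducible characters. -/
noncomputable def superchar {G : Type} [Group G] (X : Set (G → ℂ)) : G → ℂ :=
  fun g => ∑ᶠ ψ ∈ X, ψ 1 * ψ g

def Monomial (G : Type) [Group G] [Fintype G] : Prop :=
  ∀ χ : G → ℂ, IsIrrChar G χ →
    ∃ (H : Subgroup G) (lam : H →* ℂ), cInd H (fun h => lam h) = χ

def QuasiMonomial (G : Type) [Group G] [Fintype G] : Prop :=
  ∀ χ : G → ℂ, IsIrrChar G χ →
    ∃ (H : Subgroup G) (lam : H →* ℂ) (d : ℕ), 0 < d ∧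
      cInd H (fun h => lam h) = fun g => (d : ℂ) * χ g

def AlmostMonomial (G : Type) [Group G] [Fintype G] : Prop :=
  ∀ χ ψ : G → ℂ, IsIrrChar G χ → IsIrrChar G ψ → χ ≠ ψ →
    ∃ (H : Subgroup G) (lam : H →* ℂ),
      IsConstituent χ (cInd H (fun h => lam h)) ∧
      ¬ IsConstituent ψ (cInd H (fun h => lam h))

/-- A supercharacter theory of a finite group `G` (Diaconis–Isaacs). -/
structure SCTheory (G : Type) [Group G] where
  XX : Set (Set (G → ℂ))
  KK : Set (Set G)
  XX_nonempty : ∀ X ∈ XX, X.Nonempty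
  XX_disj : ∀ X ∈ XX, ∀ Y ∈ XX, X ≠ Y → Disjoint X Y
  XX_cover : ⋃₀ XX = {χ | IsIrrChar G χ}
  KK_nonempty : ∀ K ∈ KK, K.Nonempty
  KK_disj : ∀ K ∈ KK, ∀ L ∈ KK, K ≠ L → Disjoint K L
  KK_cover : ⋃₀ KK = Set.univ
  one_mem : ({1} : Set G) ∈ KK
  card_eq : Nat.card XX = Nat.card KK
  const : ∀ X ∈ XX, ∀ K ∈ KK, ∀ g ∈ K, ∀ g' ∈ K, superchar X g = superchar X g'

def CQuasiMonomial {G : Type} [Group G] [Fintype G] (C : SCTheory G) : Prop :=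
  ∀ X ∈ C.XX, ∃ (t : ℕ) (H : Fin t → Subgroup G) (lam : ∀ i, (H i) →* ℂ) (d : ℕ),
    0 < d ∧
    (∑ i, cInd (H i) (fun h => lam i h)) = fun g => (d : ℂ) * superchar X g

def CAlmostMonomial {G : Type} [Group G] [Fintype G] (C : SCTheory G) : Prop :=
  ∀ Xk ∈ C.XX, ∀ Xl ∈ C.XX, Xk ≠ Xl →
    ∃ (t : ℕ) (H : Fin t → Subgroup G) (lam : ∀ i, (H i) →* ℂ)
      (α : Set (G → ℂ) → ℕ),
      0 < α Xk ∧ α Xl = 0 ∧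
      (∑ i, cInd (H i) (fun h => lam i h)) =
        fun g => ∑ᶠ X ∈ C.XX, (α X : ℂ) * superchar X g

/-- `N` is `C`-normal: a union of superclasses. -/
def CNormal {G : Type} [Group G] (C : SCTheory G) (N : Subgroup G) : Prop :=
  ∃ S ⊆ C.KK, (N : Set G) = ⋃₀ S

/-- `Cq` is the supercharacter theory induced by `C` on `G ⧸ N`. -/
def IsQuotientTheory {G : Type} [Group G] (C : SCTheory G)
    (N : Subgroup G) [N.Normal] (Cq : SCTheory (G ⧸ N)) : Prop :=
  Cq.XX = {Y | ∃ X ∈ C.XX, (∀ χ ∈ X, ∀ n ∈ N, χ n = χ 1) ∧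
      Y = {χ' : G ⧸ N → ℂ | (fun g : G => χ' (g : G ⧸ N)) ∈ X}} ∧
  Cq.KK = {K' | ∃ K ∈ C.KK, K' = (fun g : G => (g : G ⧸ N)) '' K}

/-- The part `X × X'` of `Irr(G × G')`, via external products of characters. -/
def prodPart {G G' : Type} (X : Set (G → ℂ)) (X' : Set (G' → ℂ)) :
    Set (G × G' → ℂ) :=
  {χ | ∃ φ ∈ X, ∃ ψ ∈ X', χ = fun p => φ p.1 * ψ p.2}

/-- `Cp` is the product supercharacter theory `C × C'` on `G × G'`. -/
def IsProdTheory {G G' : Type} [Group G] [Group G'] (C : SCTheory G)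
    (C' : SCTheory G') (Cp : SCTheory (G × G')) : Prop :=
  Cp.XX = {S | ∃ X ∈ C.XX, ∃ X' ∈ C'.XX, S = prodPart X X'} ∧
  Cp.KK = {S | ∃ K ∈ C.KK, ∃ K' ∈ C'.KK, S = K ×ˢ K'}

/-! The parts of `C` contained in a part `X'` of `C'` partition `X'`, so `σ_{X'}` is the sum of
their supercharacters `σ_X`. If `d_X • σ_X` is a sum of characters induced from linear
characters, then so is `D • σ_{X'} = ∑_X (D / d_X) • (d_X • σ_X)` for `D = ∏_X d_X`. The finiteness
of these sums rests on the finiteness of `Irr(G)`, which follows from the orthogonality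
relations. -/

section IrrChar

variable {G : Type} [Group G] [Fintype G]

noncomputable def charPairing (G : Type) [Group G] [Fintype G] :
    (G → ℂ) →ₗ[ℂ] (G → ℂ) →ₗ[ℂ] ℂ :=
  LinearMap.mk₂ ℂ (fun φ ψ => ∑ g, φ g * ψ g⁻¹)
    (fun _ _ _ => by simp only [Pi.add_apply, add_mul, Finset.sum_add_distrib])
    (fun _ _ _ => by simp only [Pi.smul_apply, smul_eq_mul, mul_assoc, Finset.mul_sum])
    (fun _ _ _ => by simp only [Pi.add_apply, mul_add, Finset.sum_add_distrib])
    (fun _ _ _ => by simp only [Pi.smul_apply, smul_eq_mul, mul_left_comm, Finset.mul_sum])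

lemma charPairing_character (V W : FDRep ℂ G) [CategoryTheory.Simple V]
    [CategoryTheory.Simple W] :
    charPairing G V.character W.character =
      if Nonempty (V ≅ W) then (Nat.card G : ℂ) else 0 := by
  have := invertibleOfNonzero (NeZero.ne (Nat.card G : ℂ))
  have horth := FDRep.char_orthonormal V W
  rw [inv_mul_eq_iff_eq_mul₀ (NeZero.ne _)] at horth
  change ∑ g, _ = _
  rw [horth]
  split_ifs <;> simp

lemma IsIrrChar.charPairing_eq {χ ψ : G → ℂ} (hχ : IsIrrChar G χ) (hψ : IsIrrChar G ψ) :
    charPairing G χ ψ = if χ = ψ then (Nat.card G : ℂ) else 0 := by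
  obtain ⟨V, hV, rfl⟩ := hχ
  obtain ⟨W, hW, rfl⟩ := hψ
  by_cases hVW : Nonempty (V ≅ W)
  · rw [charPairing_character, if_pos hVW, if_pos (FDRep.char_iso hVW.some)]
  · rw [charPairing_character, if_neg hVW, if_neg]
    intro hchar
    have h := charPairing_character V W
    rw [← hchar, charPairing_character, if_neg hVW, if_pos ⟨CategoryTheory.Iso.refl V⟩] at h
    exact NeZero.ne _ h

lemma linearIndependent_isIrrChar :
    LinearIndependent ℂ (fun χ : {χ : G → ℂ // IsIrrChar G χ} => (χ : G → ℂ)) := by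
  refine LinearMap.linearIndependent_of_isOrthoᵢ (B := charPairing G) ?_ fun χ => ?_
  · refine LinearMap.isOrthoᵢ_def.2 fun χ ψ hne => ?_
    rw [χ.2.charPairing_eq ψ.2, if_neg (Subtype.coe_ne_coe.2 hne)]
  · rw [χ.2.charPairing_eq χ.2, if_pos rfl]
    exact NeZero.ne _

lemma setOf_isIrrChar_finite : {χ : G → ℂ | IsIrrChar G χ}.Finite :=
  linearIndependent_isIrrChar.setFinite

end IrrChar

lemma superchar_sUnion {G : Type} [Group G] {S : Finset (Set (G → ℂ))}
    (hdisj : (S : Set (Set (G → ℂ))).PairwiseDisjoint id) (hfin : ∀ X ∈ S, X.Finite) :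
    superchar (⋃₀ (S : Set (Set (G → ℂ)))) = ∑ X ∈ S, superchar X := by
  funext g
  rw [Finset.sum_apply, superchar, finsum_mem_sUnion hdisj S.finite_toSet hfin,
    finsum_mem_coe_finset]
  rfl

namespace SCTheory

variable {G : Type} [Group G] (C : SCTheory G)

lemma finite_of_mem_XX [Fintype G] {X : Set (G → ℂ)} (hX : X ∈ C.XX) : X.Finite :=
  setOf_isIrrChar_finite.subset (C.XX_cover ▸ Set.subset_sUnion_of_mem hX)

lemma XX_finite [Fintype G] : C.XX.Finite :=
  setOf_isIrrChar_finite.finite_subsets.subset fun _ hX =>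
    C.XX_cover ▸ Set.subset_sUnion_of_mem hX

lemma sUnion_setOf_subset_eq {C' : SCTheory G} (hle : ∀ X ∈ C.XX, ∃ X' ∈ C'.XX, X ⊆ X')
    {X' : Set (G → ℂ)} (hX' : X' ∈ C'.XX) : ⋃₀ {X ∈ C.XX | X ⊆ X'} = X' := by
  refine subset_antisymm (Set.sUnion_subset fun X hX => hX.2) fun χ hχ => ?_
  have hirr : χ ∈ ⋃₀ C.XX := C.XX_cover ▸ C'.XX_cover ▸ ⟨X', hX', hχ⟩
  obtain ⟨X, hX, hχX⟩ := hirr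
  obtain ⟨X'', hX'', hXX''⟩ := hle X hX
  obtain rfl : X'' = X' := by
    by_contra hne
    exact Set.disjoint_left.mp (C'.XX_disj X'' hX'' X' hX' hne) (hXX'' hχX) hχ
  exact ⟨X, ⟨hX, hXX''⟩, hχX⟩

end SCTheory

section InducedLinearChars

variable {G : Type} [Group G] [Fintype G]

noncomputable def inducedLinearCharSums (G : Type) [Group G] [Fintype G] :
    AddSubmonoid (G → ℂ) :=
  AddSubmonoid.closure {θ | ∃ (H : Subgroup G) (lam : H →* ℂ), cInd H (fun h => lam h) = θ}

lemma exists_fin_sum_cInd_eq {ι : Type} [Fintype ι] (H : ι → Subgroup G)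
    (lam : ∀ i, H i →* ℂ) :
    ∃ (t : ℕ) (K : Fin t → Subgroup G) (mu : ∀ i, K i →* ℂ),
      ∑ i, cInd (K i) (fun h => mu i h) = ∑ i, cInd (H i) (fun h => lam i h) :=
  ⟨Fintype.card ι, fun j => H ((Fintype.equivFin ι).symm j), fun _ => lam _,
    Fintype.sum_equiv (Fintype.equivFin ι).symm _ _ fun _ => rfl⟩

lemma mem_inducedLinearCharSums_iff {θ : G → ℂ} :
    θ ∈ inducedLinearCharSums G ↔ ∃ (t : ℕ) (H : Fin t → Subgroup G) (lam : ∀ i, H i →* ℂ),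
      ∑ i, cInd (H i) (fun h => lam i h) = θ := by
  constructor
  · intro hθ
    induction hθ using AddSubmonoid.closure_induction with
    | mem θ hθ =>
      obtain ⟨H, lam, rfl⟩ := hθ
      exact ⟨1, fun _ => H, fun _ => lam, Fin.sum_univ_one _⟩
    | zero => exact ⟨0, Fin.elim0, fun i => i.elim0, Fin.sum_univ_zero _⟩
    | add θ θ' _ _ ih ih' =>
      obtain ⟨t, H, lam, rfl⟩ := ih
      obtain ⟨t', H', lam', rfl⟩ := ih'
      obtain ⟨s, K, mu, hK⟩ := exists_fin_sum_cInd_eq (Sum.elim H H') (Sum.rec lam lam')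
      exact ⟨s, K, mu, hK.trans (Fintype.sum_sum_type _)⟩
  · rintro ⟨t, H, lam, rfl⟩
    exact AddSubmonoid.sum_mem _ fun i _ => AddSubmonoid.subset_closure ⟨H i, lam i, rfl⟩

lemma cQuasiMonomial_iff (C : SCTheory G) :
    CQuasiMonomial C ↔
      ∀ X ∈ C.XX, ∃ d : ℕ, 0 < d ∧ d • superchar X ∈ inducedLinearCharSums G := by
  have hsmul (d : ℕ) (X : Set (G → ℂ)) :
      d • superchar X = fun g => (d : ℂ) * superchar X g := by
    funext g
    rw [Pi.smul_apply, nsmul_eq_mul]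
  refine forall₂_congr fun X _ => ?_
  simp only [hsmul, mem_inducedLinearCharSums_iff]
  constructor
  · rintro ⟨t, H, lam, d, hd, hsum⟩
    exact ⟨d, hd, t, H, lam, hsum⟩
  · rintro ⟨d, hd, t, H, lam, hsum⟩
    exact ⟨t, H, lam, d, hd, hsum⟩

end InducedLinearChars

/-- Proposition 2.4(2): if `C ⪯ C'` and `G` is `C`-quasi-monomial then `G` is
`C'`-quasi-monomial. -/
theorem cQuasiMonomial_of_le (G : Type) [Group G] [Fintype G]
    (C C' : SCTheory G) (hle : ∀ X ∈ C.XX, ∃ X' ∈ C'.XX, X ⊆ X')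
    (h : CQuasiMonomial C) : CQuasiMonomial C' := by
  rw [cQuasiMonomial_iff] at h ⊢
  intro X' hX'
  choose! d hd hmem using h
  have hfin : {X ∈ C.XX | X ⊆ X'}.Finite := C.XX_finite.subset (Set.sep_subset _ _)
  set S := hfin.toFinset
  have hS : ∀ X ∈ S, X ∈ C.XX := fun X hX => (hfin.mem_toFinset.mp hX).1
  set D := ∏ X ∈ S, d X
  have hsplit : D • superchar X' = ∑ X ∈ S, (D / d X) • d X • superchar X := by
    conv_lhs => rw [← C.sUnion_setOf_subset_eq hle hX', ← hfin.coe_toFinset]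
    rw [superchar_sUnion (fun X hX Y hY => C.XX_disj X (hS X hX) Y (hS Y hY))
      fun X hX => C.finite_of_mem_XX (hS X hX), Finset.smul_sum]
    refine Finset.sum_congr rfl fun X hX => ?_
    rw [smul_smul, Nat.div_mul_cancel (Finset.dvd_prod_of_mem d hX)]
  refine ⟨D, Finset.prod_pos fun X hX => hd X (hS X hX), hsplit ▸ ?_⟩
  exact AddSubmonoid.sum_mem _ fun X hX => AddSubmonoid.nsmul_mem _ (hmem X (hS X hX)) _
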